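/- Let A be a commutative unital ring and B a left noetherian associative unital A-algebra satisfying condition (E): for every simple left B[X]-module M, the endomorphism φ(m) = X·m is integral over A. Then B is a Jacobson ring: every semiprime two-sided ideal I of B (i.e., every two-sided ideal equal to the intersection of the prime two-sided ideals containing it) is an intersection of primitive ideals of B. -/

import Mathlib

open Polynomial

/-- A two-sided ideal `P` of `B` is prime if `P ≠ B` and for all two-sided ideals
`J₁, J₂` with `J₁J₂ ⊆ P` one has `J₁ ⊆ P` or `J₂ ⊆ P`. -/
def TwoSidedIdeal.IsPrimeIdeal {B : Type} [Ring B] (P : TwoSidedIdeal B) : Prop :=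
  P ≠ ⊤ ∧ ∀ J₁ J₂ : TwoSidedIdeal B,
    (∀ a ∈ J₁, ∀ b ∈ J₂, a * b ∈ P) → J₁ ≤ P ∨ J₂ ≤ P

/-- A two-sided ideal is semiprime if it equals the intersection of the prime
two-sided ideals containing it. -/
def TwoSidedIdeal.IsSemiprimeIdeal {B : Type} [Ring B] (I : TwoSidedIdeal B) : Prop :=
  I = sInf {P : TwoSidedIdeal B | P.IsPrimeIdeal ∧ I ≤ P}

/-- A two-sided ideal is primitive if it is the annihilator of some simple
left `B`-module. -/
def TwoSidedIdeal.IsPrimitiveIdeal {B : Type} [Ring B] (P : TwoSidedIdeal B) : Prop :=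
  ∃ (M : Type) (_ : AddCommGroup M) (_ : Module B M), IsSimpleModule B M ∧
    ∀ a : B, a ∈ P ↔ ∀ m : M, a • m = 0

/-! Let `P` be prime and `a ∉ P` not nilpotent modulo `P`. Then `1 ∉ P[X] + B[X] (X a - 1)`, so
some simple `B[X]`-module `M = B[X] ⧸ N` is killed by `P` and has a generator fixed by `X a`. By (E),
`M` is finitely generated over `B`, and the integral relation of `X` shows that `M` is generated by
`a • M`; so a simple `B`-module quotient of `M` has a primitive annihilator containing `P` but not
`a`. Hence the intersection of the primitive ideals containing `P` is nil modulo `P`, and in a left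
noetherian ring such an ideal lies in `P`: pick `a` in it, outside `P`, with maximal left
annihilator modulo `P`; then `a B a ⊆ P`. -/

def ConditionE (A B : Type) [CommRing A] [Ring B] [Algebra A B] : Prop :=
  ∀ (M : Type) [AddCommGroup M] [Module (Polynomial B) M],
    IsSimpleModule (Polynomial B) M →
    ∃ n : ℕ, 1 ≤ n ∧ ∃ z : Fin n → A, ∀ m : M,
      ((X : Polynomial B) ^ n
        + ∑ i : Fin n, C (algebraMap A B (z i)) * X ^ (i : ℕ)) • m = 0

namespace TwoSidedIdeal

variable {B : Type} [Ring B]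

theorem IsPrimeIdeal.mem_of_forall_mul_mul_mem {P : TwoSidedIdeal B} (hP : P.IsPrimeIdeal)
    {a : B} (h : ∀ r, a * r * a ∈ P) : a ∈ P := by
  have hleft : ∀ v ∈ span {a}, ∀ r, a * r * v ∈ P := by
    intro v hv
    induction hv using span_induction with
    | mem x hx => rw [Set.mem_singleton_iff.1 hx]; exact h
    | zero => simp
    | add x y _ _ hx hy => intro r; rw [mul_add]; exact P.add_mem (hx r) (hy r)
    | neg x _ hx => intro r; rw [mul_neg]; exact P.neg_mem (hx r)
    | left_absorb b x _ hx => intro r; rw [← mul_assoc, mul_assoc a]; exact hx (r * b)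
    | right_absorb b x _ hx => intro r; rw [← mul_assoc]; exact P.mul_mem_right _ _ (hx r)
  have hsq : ∀ u ∈ span {a}, ∀ v ∈ span {a}, u * v ∈ P := by
    intro u hu
    induction hu using span_induction with
    | mem x hx => intro v hv; simpa [Set.mem_singleton_iff.1 hx] using hleft v hv 1
    | zero => simp
    | add x y _ _ hx hy => intro v hv; rw [add_mul]; exact P.add_mem (hx v hv) (hy v hv)
    | neg x _ hx => intro v hv; rw [neg_mul]; exact P.neg_mem (hx v hv)
    | left_absorb b x _ hx => intro v hv; rw [mul_assoc]; exact P.mul_mem_left _ _ (hx v hv)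
    | right_absorb b x _ hx =>
      intro v hv; rw [mul_assoc]; exact hx _ (mul_mem_left _ _ _ hv)
  exact (hP.2 _ _ hsq).elim (· (subset_span rfl)) (· (subset_span rfl))

def leftColon (P : TwoSidedIdeal B) (x : B) : Ideal B :=
  Submodule.comap (LinearMap.toSpanSingleton B B x) P.asIdeal

@[simp]
theorem mem_leftColon {P : TwoSidedIdeal B} {x z : B} : z ∈ P.leftColon x ↔ z * x ∈ P := by
  simp [leftColon]

theorem mul_mul_mem_of_maximal_leftColon {P K : TwoSidedIdeal B}
    (hK : ∀ x ∈ K, ∃ n : ℕ, x ^ n ∈ P) {a : B} (haK : a ∈ K)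
    (hmax : ∀ x ∈ K, x ∉ P → ¬P.leftColon a < P.leftColon x) (r : B) : a * r * a ∈ P := by
  by_cases har : a * r ∈ P
  · exact P.mul_mem_right _ _ har
  obtain ⟨j, hj, hj'⟩ : ∃ j, (a * r) ^ (j + 1) ∉ P ∧ (a * r) ^ (j + 1 + 1) ∈ P := by
    refine Nat.exists_not_and_succ_of_not_zero_of_exists (p := fun j => (a * r) ^ (j + 1) ∈ P)
      (by simpa using har) ?_
    obtain ⟨n, hn⟩ := hK _ (K.mul_mem_right _ _ haK)
    exact ⟨n, by rw [pow_succ]; exact P.mul_mem_right _ _ hn⟩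
  have hy : (a * r) ^ (j + 1) = a * (r * (a * r) ^ j) := by rw [pow_succ', mul_assoc]
  have hyK : (a * r) ^ (j + 1) ∈ K := hy ▸ K.mul_mem_right _ _ haK
  -- `(a r) ^ (j + 1) ∈ a B`, so by maximality it has the same left annihilator as `a`; and `a r`
  -- annihilates it.
  have hle : P.leftColon a ≤ P.leftColon ((a * r) ^ (j + 1)) := fun z hz => by
    rw [mem_leftColon, hy, ← mul_assoc]
    exact P.mul_mem_right _ _ (mem_leftColon.1 hz)
  have har' : a * r ∈ P.leftColon ((a * r) ^ (j + 1)) := by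
    rwa [mem_leftColon, ← pow_succ']
  rw [← hle.eq_of_not_lt (hmax _ hyK hj)] at har'
  exact mem_leftColon.1 har'

theorem IsPrimeIdeal.le_of_forall_exists_pow_mem [IsNoetherianRing B] {P K : TwoSidedIdeal B}
    (hP : P.IsPrimeIdeal) (hK : ∀ x ∈ K, ∃ n : ℕ, x ^ n ∈ P) : K ≤ P := by
  by_contra hKP
  obtain ⟨b, hbK, hbP⟩ := SetLike.not_le_iff_exists.1 hKP
  obtain ⟨_, ⟨a, ⟨haK, haP⟩, rfl⟩, hmax⟩ :=
    set_has_maximal_iff_noetherian.2 (inferInstance : IsNoetherian B B)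
      {L | ∃ x, (x ∈ K ∧ x ∉ P) ∧ P.leftColon x = L} ⟨_, b, ⟨hbK, hbP⟩, rfl⟩
  exact haP <| hP.mem_of_forall_mul_mul_mem <|
    mul_mul_mem_of_maximal_leftColon hK haK fun x hxK hxP => hmax _ ⟨x, ⟨hxK, hxP⟩, rfl⟩

theorem isPrimitiveIdeal_annihilator (M : Type) [AddCommGroup M] [Module B M]
    [IsSimpleModule B M] : (Module.annihilator B M).toTwoSided.IsPrimitiveIdeal :=
  ⟨M, inferInstance, inferInstance, inferInstance, fun _ => by simp [Module.mem_annihilator]⟩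

theorem exists_isPrimitiveIdeal_le_notMem {M : Type} [AddCommGroup M] [Module B M]
    [Module.Finite B M] [Nontrivial M] {P : TwoSidedIdeal B} (hP : ∀ p ∈ P, ∀ m : M, p • m = 0)
    {a : B} (ha : Submodule.span B (Set.range fun m : M => a • m) = ⊤) :
    ∃ Q : TwoSidedIdeal B, Q.IsPrimitiveIdeal ∧ P ≤ Q ∧ a ∉ Q := by
  obtain ⟨N, hN, -⟩ := (eq_top_or_exists_le_coatom (⊥ : Submodule B M)).resolve_left bot_ne_top
  have := isSimpleModule_iff_isCoatom.2 hN
  refine ⟨_, isPrimitiveIdeal_annihilator (M ⧸ N), fun p hp => ?_, fun haQ => hN.1 ?_⟩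
  · simp only [Ideal.mem_toTwoSided, Module.mem_annihilator]
    rintro ⟨m⟩
    rw [Submodule.Quotient.quot_mk_eq_mk, ← Submodule.Quotient.mk_smul, hP p hp,
      Submodule.Quotient.mk_zero]
  · rw [eq_top_iff, ← ha, Submodule.span_le]
    rintro _ ⟨m, rfl⟩
    rw [Ideal.mem_toTwoSided, Module.mem_annihilator] at haQ
    simpa [← Submodule.Quotient.mk_smul] using haQ (Submodule.Quotient.mk m)

def polynomial (P : TwoSidedIdeal B) : Ideal B[X] where
  carrier := {f | ∀ j, f.coeff j ∈ P}
  add_mem' hf hg j := by simpa only [coeff_add] using P.add_mem (hf j) (hg j)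
  zero_mem' j := by simpa only [coeff_zero] using P.zero_mem
  smul_mem' g f hf j := by
    rw [smul_eq_mul, coeff_mul]
    exact sum_mem fun p _ => P.mul_mem_left _ _ (hf p.2)

/-- If `g (X a - 1) ≡ 1` modulo `P[X]`, then the coefficients of `g` are `-a ^ j` modulo `P`, and
they cannot all vanish since no power of `a` lies in `P`. -/
theorem one_notMem_polynomial_sup_span {P : TwoSidedIdeal B} {a : B} (ha : ∀ n : ℕ, a ^ n ∉ P) :
    (1 : B[X]) ∉ P.polynomial ⊔ Ideal.span {X * C a - 1} := by
  intro h
  obtain ⟨p, hp, _, hv, hpv⟩ := Submodule.mem_sup.1 h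
  obtain ⟨g, rfl⟩ := Ideal.mem_span_singleton'.1 hv
  have hp' : ∀ j, (1 - (g * X * C a - g)).coeff j ∈ P := by
    rwa [eq_sub_of_add_eq hpv, mul_sub, mul_one, ← mul_assoc] at hp
  have hg : ∀ j, g.coeff j + a ^ j ∈ P := by
    intro j
    induction j with
    | zero => simpa [add_comm] using hp' 0
    | succ j ih =>
      have hstep := P.add_mem (hp' (j + 1)) (P.mul_mem_right _ a ih)
      simp only [coeff_sub, coeff_one, coeff_mul_C, coeff_mul_X] at hstep
      convert hstep using 1
      simp only [pow_succ, Nat.add_eq_zero_iff, one_ne_zero, and_false, ↓reduceIte, zero_sub, neg_sub,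
        add_mul]
      abel
  exact ha _ (by simpa using hg (g.natDegree + 1))

end TwoSidedIdeal

namespace Polynomial

variable {B : Type} [Ring B] {M : Type} [AddCommGroup M] [Module B[X] M] [Module B M]
  [IsScalarTower B B[X] M]

theorem C_smul_eq_smul (b : B) (m : M) : C b • m = b • m := by
  rw [← smul_one_smul B[X] b m, smul_eq_C_mul, mul_one]

theorem span_X_pow_smul_eq_top {q : B[X]} (hq : q.Monic) (hqM : ∀ m : M, q • m = 0) {m₀ : M}
    (hm₀ : ∀ m : M, ∃ f : B[X], f • m₀ = m) :
    Submodule.span B ((fun i => (X ^ i : B[X]) • m₀) '' Set.Iio q.natDegree) = ⊤ := by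
  rw [eq_top_iff]
  intro m _
  obtain ⟨f, rfl⟩ := hm₀ m
  rcases eq_or_ne q 1 with rfl | hq1
  · rw [← one_smul B[X] (f • m₀), hqM]
    exact Submodule.zero_mem _
  have hf : f • m₀ = (f %ₘ q) • m₀ := by
    conv_lhs => rw [← modByMonic_add_div f q]
    rw [add_smul, mul_smul, hqM, add_zero]
  rw [hf, as_sum_range' _ _ (natDegree_modByMonic_lt f hq hq1), Finset.sum_smul]
  refine Submodule.sum_mem _ fun i hi => ?_
  rw [← C_mul_X_pow_eq_monomial, mul_smul, C_smul_eq_smul]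
  exact Submodule.smul_mem _ _ (Submodule.subset_span ⟨i, Finset.mem_range.1 hi, rfl⟩)

theorem X_pow_mul_C_pow {a : B} {j n : ℕ} (hj : j ≤ n) :
    (X ^ j * C a ^ n : B[X]) = C a ^ (n - j) * (X * C a) ^ j := by
  rw [(commute_X (C a)).mul_pow, ← mul_assoc, ← (commute_X_pow _ j).eq, mul_assoc,
    pow_sub_mul_pow _ hj]

/-- Applying the monic relation to `a ^ n • m₀` and using `(X a) • m₀ = m₀` gives
`m₀ + ∑ cᵢ a ^ (n - i) • m₀ = 0`. -/
theorem exists_eq_smul_of_X_mul_C_smul_eq {a : B} {n : ℕ} {c : Fin n → B}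
    (hc : ∀ i, Commute (c i) a)
    (hqM : ∀ m : M, ((X : B[X]) ^ n + ∑ i : Fin n, C (c i) * X ^ (i : ℕ)) • m = 0) {m₀ : M}
    (hm₀ : (X * C a) • m₀ = m₀) : ∃ m₁ : M, m₀ = a • m₁ := by
  have hpow : ∀ j, (X * C a) ^ j • m₀ = m₀ := by
    intro j
    induction j with
    | zero => rw [pow_zero, one_smul]
    | succ j ih => rw [pow_succ, mul_smul, hm₀, ih]
  have hterm : ∀ i : Fin n, (C (c i) * X ^ (i : ℕ) * C a ^ n) • m₀
      = a • (c i * a ^ (n - 1 - i)) • m₀ := by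
    intro i
    rw [mul_assoc, X_pow_mul_C_pow i.is_le', ← mul_assoc, mul_smul, hpow, ← C_pow, ← C_mul,
      C_smul_eq_smul, smul_smul, ← mul_assoc, ← (hc i).eq, mul_assoc, ← pow_succ']
    congr 3
    omega
  have hrel := hqM (C a ^ n • m₀)
  rw [← mul_smul, add_mul, Finset.sum_mul, add_smul, Finset.sum_smul, X_pow_mul_C_pow le_rfl,
    Nat.sub_self, pow_zero, one_mul, hpow, Finset.sum_congr rfl fun i _ => hterm i,
    ← Finset.smul_sum] at hrel
  exact ⟨-_, by rw [smul_neg]; exact eq_neg_of_add_eq_zero_left hrel⟩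

end Polynomial

namespace TwoSidedIdeal

variable {A B : Type} [CommRing A] [Ring B] [Algebra A B]

theorem exists_isPrimitiveIdeal_le_notMem_of_forall_pow_notMem (hE : ConditionE A B)
    {P : TwoSidedIdeal B} {a : B} (ha : ∀ n : ℕ, a ^ n ∉ P) :
    ∃ Q : TwoSidedIdeal B, Q.IsPrimitiveIdeal ∧ P ≤ Q ∧ a ∉ Q := by
  obtain ⟨N, hN, hPN⟩ := Ideal.exists_le_maximal _
    (Ideal.ne_top_iff_one _ |>.2 (one_notMem_polynomial_sup_span ha))
  have hsimple := isSimpleModule_iff_isCoatom.2 (Ideal.isMaximal_def.1 hN)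
  have : Nontrivial (B[X] ⧸ N) := IsSimpleModule.nontrivial B[X] _
  obtain ⟨n, -, z, hz⟩ := hE (B[X] ⧸ N) hsimple
  let m₀ : B[X] ⧸ N := Submodule.Quotient.mk 1
  have hm₀ : ∀ f : B[X], f • m₀ = Submodule.Quotient.mk f := fun f => by
    rw [← Submodule.Quotient.mk_smul, smul_eq_mul, mul_one]
  have hspan := span_X_pow_smul_eq_top (monic_X_pow_add (degree_sum_fin_lt _)) hz
    fun m => (Submodule.Quotient.mk_surjective N m).imp fun f hf => (hm₀ f).trans hf
  have : Module.Finite B (B[X] ⧸ N) :=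
    Module.finite_def.2 <| Submodule.fg_def.2 ⟨_, (Set.finite_Iio _).image _, hspan⟩
  obtain ⟨m₁, hm₁⟩ := exists_eq_smul_of_X_mul_C_smul_eq
    (fun i => Algebra.commutes (z i) a) hz (m₀ := m₀) <| by
      rw [hm₀, Submodule.Quotient.eq]
      exact hPN (Submodule.mem_sup_right (Submodule.subset_span rfl))
  refine exists_isPrimitiveIdeal_le_notMem (M := B[X] ⧸ N) (fun p hp m => ?_) ?_
  · obtain ⟨f, rfl⟩ := Submodule.Quotient.mk_surjective N m
    rw [← Submodule.Quotient.mk_smul, Submodule.Quotient.mk_eq_zero, smul_eq_C_mul]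
    exact hPN (Submodule.mem_sup_left fun j => by rw [coeff_C_mul]; exact P.mul_mem_right _ _ hp)
  · rw [eq_top_iff, ← hspan, Submodule.span_le]
    rintro _ ⟨i, -, rfl⟩
    refine Submodule.subset_span ⟨(X ^ i : B[X]) • m₁, ?_⟩
    change a • (X ^ i : B[X]) • m₁ = (X ^ i : B[X]) • m₀
    rw [hm₁, ← C_smul_eq_smul a, ← C_smul_eq_smul a, ← mul_smul, ← mul_smul,
      (commute_X_pow _ i).eq]

theorem IsPrimeIdeal.sInf_isPrimitiveIdeal_le [IsNoetherianRing B] (hE : ConditionE A B)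
    {P : TwoSidedIdeal B} (hP : P.IsPrimeIdeal) :
    sInf {Q : TwoSidedIdeal B | Q.IsPrimitiveIdeal ∧ P ≤ Q} ≤ P :=
  hP.le_of_forall_exists_pow_mem fun x hx => by
    by_contra! hxP
    obtain ⟨Q, hQ, hPQ, hxQ⟩ := exists_isPrimitiveIdeal_le_notMem_of_forall_pow_notMem hE hxP
    exact hxQ ((mem_sInf B).1 hx Q ⟨hQ, hPQ⟩)

end TwoSidedIdeal

/-- Let `A` be a commutative ring and `B` a left noetherian `A`-algebra satisfying
condition (E): for every simple left `B[X]`-module `M`, the endomorphism `φ(m) = X • m`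
is integral over `A`.  Then `B` is a Jacobson ring: every semiprime two-sided ideal of
`B` is an intersection of primitive ideals. -/
theorem jacobson_ring_of_condition_E (A B : Type) [CommRing A] [Ring B] [Algebra A B]
    [IsNoetherianRing B]
    (hE : ∀ (M : Type) [AddCommGroup M] [Module (Polynomial B) M],
      IsSimpleModule (Polynomial B) M →
      ∃ n : ℕ, 1 ≤ n ∧ ∃ z : Fin n → A, ∀ m : M,
        ((X : Polynomial B) ^ n
          + ∑ i : Fin n, C (algebraMap A B (z i)) * X ^ (i : ℕ)) • m = 0) :
    ∀ I : TwoSidedIdeal B, I.IsSemiprimeIdeal →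
      ∃ S : Set (TwoSidedIdeal B), (∀ P ∈ S, P.IsPrimitiveIdeal) ∧ I = sInf S := by
  intro I hI
  refine ⟨{Q | Q.IsPrimitiveIdeal ∧ I ≤ Q}, fun Q hQ => hQ.1,
    le_antisymm (le_sInf fun Q hQ => hQ.2) ?_⟩
  conv_rhs => rw [hI]
  refine le_sInf fun P ⟨hP, hIP⟩ => le_trans ?_ (hP.sInf_isPrimitiveIdeal_le hE)
  exact sInf_le_sInf fun Q ⟨hQ, hPQ⟩ => ⟨hQ, hIP.trans hPQ⟩
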